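/- Let γ be a nontrivial template whose internal graph g(γ) contains the subgraph of a connected component, and let μ be a connected template with μ ≠ γ. Then there exists a vertex w ∈ g(γ) and a bond or leg n incident to w such that γ(n) ≠ μ(n). -/

import Mathlib

/-- Vertices of the 2×2×2 cube. -/
abbrev CubeVertex := Fin 3 → Fin 2

/-- The two directions perpendicular to a given direction. -/
def others : Fin 3 → Fin 3 × Fin 3 := fun d =>
  if d = 0 then (1, 2) else if d = 1 then (0, 2) else (0, 1)

/-- The 12 bonds of the cubic contraction. -/
abbrev Bond := Fin 3 × Fin 2 × Fin 2

/-- The 24 external legs of the cubic contraction. -/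
abbrev Leg := CubeVertex × Fin 3

/-- The 36 labels: 12 bonds and 24 legs. -/
abbrev Label := Bond ⊕ Leg

/-- The endpoint of a bond on side `s` of its direction. -/
def bondVertex (b : Bond) (s : Fin 2) : CubeVertex := fun d' =>
  if d' = b.1 then s else if d' = (others b.1).1 then b.2.1 else b.2.2

/-- Incidence of a vertex with a bond or leg. -/
def Incident (v : CubeVertex) : Label → Prop
  | Sum.inl b => v = bondVertex b 0 ∨ v = bondVertex b 1
  | Sum.inr l => v = l.1

/-- A template. -/
abbrev Template := Label → Bool

/-- Vertex set of the internal graph of a template. -/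
def Vset (γ : Template) : Set CubeVertex := {v | ∃ l, γ l = true ∧ Incident v l}

/-- The internal graph of a template, as a simple graph on the cube vertices. -/
def templGraph (γ : Template) : SimpleGraph CubeVertex where
  Adj v w := v ≠ w ∧ ∃ b : Bond, γ (Sum.inl b) = true ∧
    ((v = bondVertex b 0 ∧ w = bondVertex b 1) ∨
     (v = bondVertex b 1 ∧ w = bondVertex b 0))
  symm := ⟨by
    rintro v w ⟨hne, b, hb, h⟩
    exact ⟨hne.symm, b, hb, by tauto⟩⟩
  loopless := ⟨fun v h => h.1 rfl⟩

/-- A template is connected if its internal graph (induced on its vertex set)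
is connected. -/
def TConnected (γ : Template) : Prop :=
  ((templGraph γ).induce (Vset γ)).Connected

/-!
Suppose `γ` and `μ` agree on every label at every vertex of `Vset γ`. Agreement then propagates
along the bonds of `μ`: a `μ`-bond at a vertex of `Vset γ` is a `γ`-bond, so its other end is in
`Vset γ` too. As `μ` is connected and shares a vertex with `Vset γ`, this gives
`Vset μ ⊆ Vset γ`. But a label where `γ` and `μ` differ is `true` for one of them, so its
endpoints lie in `Vset γ ∪ Vset μ = Vset γ`, where no disagreement was allowed.
-/

theorem SimpleGraph.Preconnected.mem_of_adj_mem {V : Type*} {G : SimpleGraph V}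
    (hG : G.Preconnected) {S : Set V} (hS : ∀ a b, G.Adj a b → b ∈ S → a ∈ S)
    {x y : V} (hy : y ∈ S) : x ∈ S := by
  by_contra hx
  obtain ⟨d, -, hd₁, hd₂⟩ := (hG y x).some.exists_boundary_dart S hy hx
  exact hd₂ (hS _ _ d.adj.symm hd₁)

def AgreeAt (γ μ : Template) (v : CubeVertex) : Prop :=
  ∀ l, Incident v l → γ l = μ l

lemma exists_incident (l : Label) : ∃ v, Incident v l := by
  cases l with
  | inl b => exact ⟨bondVertex b 0, Or.inl rfl⟩
  | inr l => exact ⟨l.1, rfl⟩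

lemma AgreeAt.mem_Vset_iff {γ μ : Template} {v : CubeVertex} (h : AgreeAt γ μ v) :
    v ∈ Vset γ ↔ v ∈ Vset μ := by
  constructor
  · rintro ⟨l, hl, hv⟩
    exact ⟨l, h l hv ▸ hl, hv⟩
  · rintro ⟨l, hl, hv⟩
    exact ⟨l, (h l hv).symm ▸ hl, hv⟩

lemma mem_Vset_or_mem_Vset_of_ne {γ μ : Template} {v : CubeVertex} {l : Label}
    (hv : Incident v l) (hl : γ l ≠ μ l) : v ∈ Vset γ ∨ v ∈ Vset μ := by
  cases hγ : γ l
  · rw [hγ] at hl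
    exact Or.inr ⟨l, by simpa using hl.symm, hv⟩
  · exact Or.inl ⟨l, hγ, hv⟩

lemma exists_bond_of_templGraph_adj {μ : Template} {a b : CubeVertex}
    (h : (templGraph μ).Adj a b) :
    ∃ e : Bond, μ (Sum.inl e) = true ∧ Incident a (Sum.inl e) ∧ Incident b (Sum.inl e) := by
  obtain ⟨-, e, he, ⟨rfl, rfl⟩ | ⟨rfl, rfl⟩⟩ := h
  · exact ⟨e, he, Or.inl rfl, Or.inr rfl⟩
  · exact ⟨e, he, Or.inr rfl, Or.inl rfl⟩

lemma mem_Vset_of_templGraph_adj {γ μ : Template} {a b : CubeVertex}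
    (hab : (templGraph μ).Adj a b) (hb : AgreeAt γ μ b) : a ∈ Vset γ := by
  obtain ⟨e, he, hae, hbe⟩ := exists_bond_of_templGraph_adj hab
  exact ⟨Sum.inl e, (hb _ hbe).trans he, hae⟩

/-- Lemma 5.5: if `μ` is a connected template and `γ` is a nontrivial template
with `γ ≠ μ`, then some vertex of the internal graph of `γ` has an incident
bond or leg on which `γ` and `μ` disagree. -/
theorem exists_disagreeing_vertex (γ μ : Template)
    (hγ : (Vset γ).Nonempty) (hμ : TConnected μ) (hne : γ ≠ μ) :
    ∃ w ∈ Vset γ, ∃ l : Label, Incident w l ∧ γ l ≠ μ l := by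
  by_contra! hagree
  obtain ⟨l, hl⟩ := Function.ne_iff.mp hne
  obtain ⟨u, hu⟩ := exists_incident l
  have huγ : u ∉ Vset γ := fun h => hl (hagree u h l hu)
  have huμ : u ∈ Vset μ := (mem_Vset_or_mem_Vset_of_ne hu hl).resolve_left huγ
  obtain ⟨v, hvγ⟩ := hγ
  have hvμ : v ∈ Vset μ := (AgreeAt.mem_Vset_iff (hagree v hvγ)).mp hvγ
  exact huγ <| hμ.preconnected.mem_of_adj_mem (S := {x : Vset μ | (x : CubeVertex) ∈ Vset γ})
    (fun a b hab hb => mem_Vset_of_templGraph_adj (SimpleGraph.induce_adj.mp hab) (hagree b hb))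
    (x := ⟨u, huμ⟩) (y := ⟨v, hvμ⟩) hvγ
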